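/- arXiv:1712.05742 — 2 statements merged into one kernel-verified Lean document; each statement's English description precedes it below -/
import Mathlib

section
/- Let F be ℝ or ℂ, and let A, B be m×s matrices and C, D be n×s matrices over F such that 2·rank[A B] > 3s and 2·rank[C D] > 3s, where [A B] and [C D] denote the m×2s and n×2s concatenated matrices. Then the m×n pencil P = (ACᵀ + BDᵀ, BCᵀ) satisfies: P ∉ B_{s,s}, yet the infimum over (A',B') ∈ B_{s,s} of ‖P − (A',B')‖ equals 0. Consequently P has no best approximation in B_{s,s} in the norm topology. -/
open Matrix

/-- `(A', B')` lies in the orbit of the pencil `(A, B)` under the action of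
`GL_m(F) × GL_n(F) × GL_2(F)` given by
`(P, U, T) · (A, B) = (P (t₁₁ A + t₁₂ B) Uᵀ, P (t₂₁ A + t₂₂ B) Uᵀ)`. -/
def InOrbit {F : Type*} [Field F] {m n : ℕ}
    (A B A' B' : Matrix (Fin m) (Fin n) F) : Prop :=
  ∃ (P : Matrix (Fin m) (Fin m) F) (U : Matrix (Fin n) (Fin n) F)
    (T : Matrix (Fin 2) (Fin 2) F),
    IsUnit P.det ∧ IsUnit U.det ∧ IsUnit T.det ∧
    A' = P * (T 0 0 • A + T 0 1 • B) * U.transpose ∧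
    B' = P * (T 1 0 • A + T 1 1 • B) * U.transpose

/-- The pencil `(A, B)` belongs to `B_{r,s}`: some pencil in its orbit has
first coefficient of rank `≤ r` and second coefficient of rank `≤ s`. -/
def InBset {F : Type*} [Field F] {m n : ℕ} (r s : ℕ)
    (A B : Matrix (Fin m) (Fin n) F) : Prop :=
  ∃ A' B', InOrbit A B A' B' ∧ A'.rank ≤ r ∧ B'.rank ≤ s


/-- Squared Frobenius norm of a matrix. -/
noncomputable def frobSq {F : Type*} [RCLike F] {m n : ℕ}
    (A : Matrix (Fin m) (Fin n) F) : ℝ :=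
  ∑ i, ∑ j, ‖A i j‖ ^ 2

/-- Distance between two pencils induced by the norm
`‖(A, B)‖ = √(‖A‖_F² + ‖B‖_F²)`. -/
noncomputable def pdist {F : Type*} [RCLike F] {m n : ℕ}
    (p q : Matrix (Fin m) (Fin n) F × Matrix (Fin m) (Fin n) F) : ℝ :=
  Real.sqrt (frobSq (p.1 - q.1) + frobSq (p.2 - q.2))

/-!
For `α ≠ 0`, `α (A Cᵀ + B Dᵀ) + β B Cᵀ = [A B] ([C D] K)ᵀ` with `K = [[α I, β I], [0, α I]]`
invertible, so Sylvester's rank inequality bounds its rank below by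
`rank [A B] + rank [C D] - 2s > s`. An invertible `T ∈ GL₂` has a nonzero entry in its first
column, hence every pencil in the orbit of `P = (A Cᵀ + B Dᵀ, B Cᵀ)` has a coefficient of this
form, and `P ∉ B_{s,s}`. On the other hand, for `t ≠ 0` the pencil `(A Cᵀ + B Dᵀ, B Cᵀ + t A Cᵀ)`
lies in `B_{s,s}` and is at distance `|t| ‖A Cᵀ‖_F` from `P`. A best approximation would be at
positive distance from `P`, which some such pencil beats.
-/

theorem Matrix.rank_add_rank_le_rank_mul_add_card {F : Type*} [Field F] {m k n : Type*}
    [Fintype k] [Fintype n] (X : Matrix m k F) (Y : Matrix k n F) :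
    X.rank + Y.rank ≤ (X * Y).rank + Fintype.card k := by
  classical
  set f := X.mulVecLin
  set W := LinearMap.range Y.mulVecLin
  have hXY : (X * Y).rank = Module.finrank F (W.map f) := by
    rw [Matrix.rank, Matrix.mulVecLin_mul, LinearMap.range_comp]
  have hY : Module.finrank F (W.map f) + Module.finrank F ((LinearMap.ker f).comap W.subtype)
      = Y.rank := by
    rw [← LinearMap.range_domRestrict, ← LinearMap.ker_domRestrict]
    exact LinearMap.finrank_range_add_finrank_ker _
  have hker : Module.finrank F ((LinearMap.ker f).comap W.subtype) ≤
      Module.finrank F (LinearMap.ker f) :=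
    (Submodule.equivMapOfInjective _ W.injective_subtype _).finrank_eq.trans_le
      (Submodule.finrank_mono (Submodule.map_comap_le _ _))
  have hX : X.rank + Module.finrank F (LinearMap.ker f) = Fintype.card k := by
    rw [Matrix.rank, LinearMap.finrank_range_add_finrank_ker, Module.finrank_fintype_fun_eq_card]
  omega

theorem rank_fromCols_add_rank_fromCols_le {F : Type*} [Field F] {m n k : Type*}
    [Fintype n] [Fintype k] [DecidableEq k]
    (A B : Matrix m k F) (C D : Matrix n k F) {α : F} (hα : α ≠ 0) (β : F) :
    (fromCols A B).rank + (fromCols C D).rank ≤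
      (α • (A * Cᵀ + B * Dᵀ) + β • (B * Cᵀ)).rank + 2 * Fintype.card k := by
  set K : Matrix (k ⊕ k) (k ⊕ k) F := fromBlocks (α • 1) (β • 1) 0 (α • 1)
  have hK : IsUnit K.det := by
    simpa [K, det_fromBlocks_zero₂₁, det_smul] using pow_ne_zero _ (mul_ne_zero hα hα)
  have hfactor : fromCols A B * (fromCols C D * K)ᵀ =
      α • (A * Cᵀ + B * Dᵀ) + β • (B * Cᵀ) := by
    simp only [K, fromCols_mul_fromBlocks, transpose_fromCols, fromCols_mul_fromRows,
      Matrix.mul_smul, Matrix.mul_one, Matrix.mul_zero, add_zero, transpose_add,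
      transpose_smul, Matrix.mul_add, smul_add]
    abel
  have := rank_add_rank_le_rank_mul_add_card (fromCols A B) (fromCols C D * K)ᵀ
  rwa [hfactor, rank_transpose, rank_mul_eq_left_of_isUnit_det _ _ hK, Fintype.card_sum,
    ← two_mul] at this

theorem InOrbit.exists_rank_eq {F : Type*} [Field F] {m n : ℕ}
    {A B A' B' : Matrix (Fin m) (Fin n) F} (h : InOrbit A B A' B') :
    ∃ T : Matrix (Fin 2) (Fin 2) F, IsUnit T.det ∧
      A'.rank = (T 0 0 • A + T 0 1 • B).rank ∧ B'.rank = (T 1 0 • A + T 1 1 • B).rank := by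
  obtain ⟨P, U, T, hP, hU, hT, rfl, rfl⟩ := h
  have hUt : IsUnit Uᵀ.det := by rwa [det_transpose]
  refine ⟨T, hT, ?_, ?_⟩ <;>
    rw [rank_mul_eq_left_of_isUnit_det _ _ hUt, rank_mul_eq_right_of_isUnit_det _ _ hP]

theorem not_inBset_of_lt_rank {F : Type*} [Field F] {m n r : ℕ}
    {P Q : Matrix (Fin m) (Fin n) F} (h : ∀ α β : F, α ≠ 0 → r < (α • P + β • Q).rank) :
    ¬ InBset r r P Q := by
  rintro ⟨A', B', hPQ, hA', hB'⟩
  obtain ⟨T, hT, hrankA, hrankB⟩ := hPQ.exists_rank_eq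
  by_cases hT₀₀ : T 0 0 = 0
  · have hT₁₀ : T 1 0 ≠ 0 := fun hT₁₀ => hT.ne_zero (by simp [det_fin_two, hT₀₀, hT₁₀])
    exact (h _ _ hT₁₀).not_ge (hrankB ▸ hB')
  · exact (h _ _ hT₀₀).not_ge (hrankA ▸ hA')

theorem not_inBset_of_three_mul_lt_two_mul_rank {F : Type*} [Field F] {m n s : ℕ}
    (A B : Matrix (Fin m) (Fin s) F) (C D : Matrix (Fin n) (Fin s) F)
    (hAB : 3 * s < 2 * (fromCols A B).rank) (hCD : 3 * s < 2 * (fromCols C D).rank) :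
    ¬ InBset s s (A * Cᵀ + B * Dᵀ) (B * Cᵀ) :=
  not_inBset_of_lt_rank fun _ β hα => by
    have := rank_fromCols_add_rank_fromCols_le A B C D hα β
    rw [Fintype.card_fin] at this
    omega

/-- The shear `T = [[1, -t⁻¹], [0, 1]]` maps the pencil to `(B (D - t⁻¹ C)ᵀ, (B + t A) Cᵀ)`. -/
theorem inBset_add_smul {F : Type*} [Field F] {m n s : ℕ}
    (A B : Matrix (Fin m) (Fin s) F) (C D : Matrix (Fin n) (Fin s) F) {t : F} (ht : t ≠ 0) :
    InBset s s (A * Cᵀ + B * Dᵀ) (B * Cᵀ + t • (A * Cᵀ)) := by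
  refine ⟨B * (D - t⁻¹ • C)ᵀ, (B + t • A) * Cᵀ, ⟨1, 1, !![1, -t⁻¹; 0, 1], ?_⟩, ?_, ?_⟩
  · refine ⟨by simp, by simp, by simp [det_fin_two_of], ?_, ?_⟩
    · simp only [of_apply, cons_val', cons_val_zero, cons_val_one, empty_val',
        cons_val_fin_one, transpose_one, Matrix.one_mul, Matrix.mul_one, one_smul,
        transpose_sub, transpose_smul, Matrix.mul_sub, Matrix.mul_smul, smul_add, smul_smul,
        neg_mul, inv_mul_cancel₀ ht, neg_smul]
      abel
    · simp [Matrix.add_mul]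
  · exact (rank_mul_le_left _ _).trans (by simpa using B.rank_le_card_width)
  · exact (rank_mul_le_right _ _).trans (by simpa using Cᵀ.rank_le_card_height)

section Distance

attribute [local instance] Matrix.frobeniusNormedAddCommGroup Matrix.frobeniusNormSMulClass

variable {F : Type*} [RCLike F] {m n : ℕ}

theorem frobSq_eq_norm_sq (X : Matrix (Fin m) (Fin n) F) : frobSq X = ‖X‖ ^ 2 := by
  simp only [frobenius_norm_def, Real.rpow_two, ← Real.sqrt_eq_rpow]
  rw [Real.sq_sqrt (by positivity), frobSq]

theorem pdist_same_fst (X Y Z : Matrix (Fin m) (Fin n) F) :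
    pdist (X, Y) (X, Z) = ‖Y - Z‖ := by
  simp [pdist, frobSq_eq_norm_sq]

theorem pdist_pos {p q : Matrix (Fin m) (Fin n) F × Matrix (Fin m) (Fin n) F} (h : p ≠ q) :
    0 < pdist p q := by
  rw [pdist, frobSq_eq_norm_sq, frobSq_eq_norm_sq, Real.sqrt_pos]
  rcases p with ⟨p₁, p₂⟩
  rcases q with ⟨q₁, q₂⟩
  by_cases h₁ : p₁ = q₁
  · have : 0 < ‖p₂ - q₂‖ := norm_pos_iff.2 (sub_ne_zero.2 fun h₂ => h (by rw [h₁, h₂]))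
    positivity
  · have : 0 < ‖p₁ - q₁‖ := norm_pos_iff.2 (sub_ne_zero.2 h₁)
    positivity

theorem exists_inBset_pdist_lt {s : ℕ} (A B : Matrix (Fin m) (Fin s) F)
    (C D : Matrix (Fin n) (Fin s) F) {ε : ℝ} (hε : 0 < ε) :
    ∃ A' B', InBset s s A' B' ∧ pdist (A * Cᵀ + B * Dᵀ, B * Cᵀ) (A', B') < ε := by
  obtain ⟨t, ht, htε⟩ := exists_pos_mul_lt hε ‖A * Cᵀ‖
  refine ⟨_, _, inBset_add_smul A B C D (RCLike.ofReal_ne_zero.2 ht.ne'), ?_⟩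
  rwa [pdist_same_fst, sub_add_cancel_left, norm_neg, norm_smul, RCLike.norm_ofReal,
    abs_of_pos ht, mul_comm]

end Distance

/-- If `2 rank [A B] > 3s` and `2 rank [C D] > 3s`, then the pencil
`(A Cᵀ + B Dᵀ, B Cᵀ)` is not in `B_{s,s}`, yet its distance to `B_{s,s}` is
zero; consequently it has no best approximation in `B_{s,s}`. -/
theorem no_best_approximation_template {F : Type*} [RCLike F] {m n s : ℕ}
    (A B : Matrix (Fin m) (Fin s) F) (C D : Matrix (Fin n) (Fin s) F)
    (hAB : 3 * s < 2 * (Matrix.fromCols A B).rank)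
    (hCD : 3 * s < 2 * (Matrix.fromCols C D).rank) :
    ¬ InBset s s (A * Cᵀ + B * Dᵀ) (B * Cᵀ) ∧
    (∀ ε : ℝ, 0 < ε → ∃ A' B', InBset s s A' B' ∧
      pdist (A * Cᵀ + B * Dᵀ, B * Cᵀ) (A', B') < ε) ∧
    ¬ ∃ A' B', InBset s s A' B' ∧ ∀ A'' B'', InBset s s A'' B'' →
      pdist (A * Cᵀ + B * Dᵀ, B * Cᵀ) (A', B') ≤
        pdist (A * Cᵀ + B * Dᵀ, B * Cᵀ) (A'', B'') := by
  have hP := not_inBset_of_three_mul_lt_two_mul_rank A B C D hAB hCD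
  refine ⟨hP, fun _ => exists_inBset_pdist_lt A B C D, ?_⟩
  rintro ⟨A', B', hA'B', hmin⟩
  have hpos : 0 < pdist (A * Cᵀ + B * Dᵀ, B * Cᵀ) (A', B') :=
    pdist_pos fun h => by cases h; exact hP hA'B'
  obtain ⟨A'', B'', hA''B'', hlt⟩ := exists_inBset_pdist_lt A B C D hpos
  exact (hmin A'' B'' hA''B'').not_gt hlt
end

section
/- Let F be ℝ or ℂ, and let A, B be arbitrary m×s matrices and C, D be arbitrary n×s matrices over F. Then the pencil (ACᵀ + BDᵀ, BCᵀ) lies in the closure (in the norm topology) of the set B_{s,s} of m×n pencils: explicitly, the pencils P_n = (n(B + A/n)(C + D/n)ᵀ − n·BCᵀ, (B + A/n)(C + D/n)ᵀ) belong to B_{s,s} and converge to (ACᵀ + BDᵀ, BCᵀ) as n → ∞. -/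
open Matrix

/-! With `M_N = (B + A/N)(C + D/N)ᵀ`, the `GL_2` move `(X, Y) ↦ (Y - X/N, Y)` sends the `N`-th
pencil to `(B Cᵀ, M_N)`, two products through `F^s`, hence of rank `≤ s`. Expanding `M_N`, the
first coefficient is `A Cᵀ + B Dᵀ + N⁻¹ A Dᵀ`, so the pencils converge. -/

section

variable {F : Type*}

theorem inOrbit_of_isUnit_det [Field F] {m n : ℕ} (A B : Matrix (Fin m) (Fin n) F)
    {T : Matrix (Fin 2) (Fin 2) F} (hT : IsUnit T.det) :
    InOrbit A B (T 0 0 • A + T 0 1 • B) (T 1 0 • A + T 1 1 • B) :=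
  ⟨1, 1, T, by simp, by simp, hT, by simp, by simp⟩

/-- The `GL_2` element `!![-c⁻¹, 1; 0, 1]` turns `(c (Y - Z), Y)` into `(Z, Y)`. -/
theorem inBset_smul_sub [Field F] {m n r s : ℕ} {Y Z : Matrix (Fin m) (Fin n) F} {c : F}
    (hc : c ≠ 0) (hZ : Z.rank ≤ r) (hY : Y.rank ≤ s) :
    InBset r s (c • (Y - Z)) Y := by
  have hT : IsUnit (!![-c⁻¹, 1; 0, 1] : Matrix (Fin 2) (Fin 2) F).det := by
    simpa [det_fin_two_of] using hc
  refine ⟨_, _, inOrbit_of_isUnit_det _ Y hT, ?_, by simpa using hY⟩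
  simpa [smul_smul, inv_mul_cancel₀ hc] using hZ

theorem Filter.Tendsto.pdist_nhds_zero [RCLike F] {m n : ℕ} {α : Type*} {l : Filter α}
    {f : α → Matrix (Fin m) (Fin n) F × Matrix (Fin m) (Fin n) F}
    {q : Matrix (Fin m) (Fin n) F × Matrix (Fin m) (Fin n) F} (hf : Filter.Tendsto f l (nhds q)) :
    Filter.Tendsto (fun x => pdist (f x) q) l (nhds 0) := by
  have hcont : Continuous fun p => pdist p q := by
    unfold pdist frobSq
    fun_prop
  have hqq : pdist q q = 0 := by simp [pdist, frobSq]
  exact hqq ▸ (hcont.tendsto q).comp hf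

theorem smul_mul_transpose_sub [Field F] {m n s : ℕ}
    (A B : Matrix (Fin m) (Fin s) F) (C D : Matrix (Fin n) (Fin s) F) {c : F} (hc : c ≠ 0) :
    c • ((B + c⁻¹ • A) * (C + c⁻¹ • D)ᵀ) - c • (B * Cᵀ) = A * Cᵀ + B * Dᵀ + c⁻¹ • (A * Dᵀ) := by
  simp only [transpose_add, transpose_smul, Matrix.mul_add, Matrix.add_mul, Matrix.smul_mul,
    Matrix.mul_smul, smul_add, smul_smul, mul_inv_cancel₀ hc, ← mul_assoc, one_mul, one_smul]
  abel

end

/-- The pencils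
`P_N = (N (B + A/N)(C + D/N)ᵀ − N B Cᵀ, (B + A/N)(C + D/N)ᵀ)` belong to
`B_{s,s}` and converge to `(A Cᵀ + B Dᵀ, B Cᵀ)` as `N → ∞`; hence
`(A Cᵀ + B Dᵀ, B Cᵀ)` lies in the closure of `B_{s,s}` in the norm topology. -/
theorem pencil_in_closure_Bss {F : Type*} [RCLike F] {m n s : ℕ}
    (A B : Matrix (Fin m) (Fin s) F) (C D : Matrix (Fin n) (Fin s) F) :
    (∀ N : ℕ, 0 < N →
      InBset s s
        ((N : F) • ((B + (N : F)⁻¹ • A) * (C + (N : F)⁻¹ • D)ᵀ) - (N : F) • (B * Cᵀ))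
        ((B + (N : F)⁻¹ • A) * (C + (N : F)⁻¹ • D)ᵀ)) ∧
    Filter.Tendsto (fun N : ℕ =>
        pdist
          ((N : F) • ((B + (N : F)⁻¹ • A) * (C + (N : F)⁻¹ • D)ᵀ) - (N : F) • (B * Cᵀ),
            (B + (N : F)⁻¹ • A) * (C + (N : F)⁻¹ • D)ᵀ)
          (A * Cᵀ + B * Dᵀ, B * Cᵀ))
      Filter.atTop (nhds 0) := by
  refine ⟨fun N hN => ?_, ?_⟩
  · rw [← smul_sub]
    exact inBset_smul_sub (Nat.cast_ne_zero.2 hN.ne')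
      ((rank_mul_le_left _ _).trans (rank_le_width _))
      ((rank_mul_le_left _ _).trans (rank_le_width _))
  · set L := (A * Cᵀ + B * Dᵀ, B * Cᵀ)
    let g : F → Matrix (Fin m) (Fin n) F × Matrix (Fin m) (Fin n) F := fun ε =>
      (A * Cᵀ + B * Dᵀ + ε • (A * Dᵀ), (B + ε • A) * (C + ε • D)ᵀ)
    have hg : Continuous g := by fun_prop
    have hgL : Filter.Tendsto (fun N : ℕ => g (N : F)⁻¹) Filter.atTop (nhds L) := by
      have hg0 : g 0 = L := by simp [g, L]
      exact hg0 ▸ (hg.tendsto 0).comp tendsto_inv_atTop_nhds_zero_nat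
    have hpencil : (fun N : ℕ => g (N : F)⁻¹) =ᶠ[Filter.atTop] fun N : ℕ =>
        ((N : F) • ((B + (N : F)⁻¹ • A) * (C + (N : F)⁻¹ • D)ᵀ) - (N : F) • (B * Cᵀ),
          (B + (N : F)⁻¹ • A) * (C + (N : F)⁻¹ • D)ᵀ) := by
      filter_upwards [Filter.eventually_ne_atTop 0] with N hN
      rw [smul_mul_transpose_sub A B C D (Nat.cast_ne_zero.2 hN)]
    exact (hgL.congr' hpencil).pdist_nhds_zero
end
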